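/- (Gradual sampling with Δ̂ = 0: O(σ²L log n /(μ²n)) rate.) Let F_s, F_l : ℝ^d → ℝ be differentiable, let p ∈ [0,1], set 𝓛 = (1 − p)F_s + pF_l, and suppose 𝓛 is L-smooth, satisfies the μ-PL condition with infimum value 𝓛*, and ∇F_s = ∇F_l everywhere. Let D₀ = 𝓛(w_0) − 𝓛* > 0, let n ≥ 1 satisfy 2μ²nD₀ ≥ σ²L with σ > 0, and set η₁ = (1/(μn))·log(2μ²nD₀/(σ²L)); assume η₁ ≤ 1/L and η₁μ ≤ 1. Let (W_t) be adapted to a filtration (𝓕_t) with deterministic initial point W_0 = w_0, and let G_t be square-integrable, 𝓕_{t+1}-measurable ℝ^d-valued random vectors with, almost surely, W_{t+1} = W_t − η₁G_t, E[G_t | 𝓕_t] = ∇F_s(W_t), and E[‖G_t − ∇F_s(W_t)‖² | 𝓕_t] ≤ σ². Then E[𝓛(W_n)] − 𝓛* ≤ (σ²L/(2μ²n))·(1 + log(2μ²nD₀/(σ²L))). -/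

import Mathlib

/-!
Because `∇F_s = ∇F_l`, the gradient of `𝓛` is `∇F_s`, so `G_t` is an unbiased estimate of
`∇𝓛(W_t)` with conditional variance at most `σ²`. Integrating the quadratic upper bound of the
`L`-smooth `𝓛` along the step `W_{t+1} = W_t - η G_t`, the pull-out property of conditional
expectation gives `E⟪∇𝓛(W_t), G_t⟫ = E‖∇𝓛(W_t)‖²` and `E‖G_t‖² ≤ E‖∇𝓛(W_t)‖² + σ²`; with
`ηL ≤ 1` and the PL inequality this yields `e_{t+1} ≤ (1 - ημ) e_t + Lη²σ²/2` for
`e_t = E𝓛(W_t) - 𝓛*`. Unrolling, `e_n ≤ (1 - ημ)ⁿ D₀ + Lησ²/(2μ)`, and the choice of `η` makes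
`(1 - ημ)ⁿ ≤ e^{-ημn} = σ²L/(2μ²nD₀)` while `Lησ²/(2μ) = σ²L log(2μ²nD₀/(σ²L))/(2μ²n)`.
-/

open MeasureTheory RealInnerProductSpace

section Smooth

variable {F : Type*} [NormedAddCommGroup F] [InnerProductSpace ℝ F] [CompleteSpace F]

theorem gradient_affine_combination_of_gradient_eq {f g : F → ℝ} {v : F}
    (hf : DifferentiableAt ℝ f v) (hg : DifferentiableAt ℝ g v)
    (hfg : gradient f v = gradient g v) (p : ℝ) :
    gradient (fun w => (1 - p) * f w + p * g w) v = gradient f v := by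
  have hfg' : fderiv ℝ g v = fderiv ℝ f v := by
    rw [← toDual_gradient, ← toDual_gradient, hfg]
  have h : HasFDerivAt (fun w => (1 - p) * f w + p * g w) (fderiv ℝ f v) v := by
    refine ((hf.hasFDerivAt.const_mul (1 - p)).add (hg.hasFDerivAt.const_mul p)).congr_fderiv ?_
    rw [hfg', ← add_smul, sub_add_cancel, one_smul]
  simp only [gradient, h.fderiv]

theorem LipschitzWith.abs_sub_sub_inner_gradient_le {f : F → ℝ} {K : NNReal}
    (hK : LipschitzWith K (gradient f)) (hf : Differentiable ℝ f) (x y : F) :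
    |f y - f x - ⟪gradient f x, y - x⟫| ≤ K / 2 * ‖y - x‖ ^ 2 := by
  obtain ⟨v, rfl⟩ : ∃ v, y = x + v := ⟨y - x, by abel⟩
  rw [add_sub_cancel_left]
  have hderiv (t : ℝ) : HasDerivAt (fun s : ℝ => f (x + s • v) - f x - s * ⟪gradient f x, v⟫)
      ⟪gradient f (x + t • v) - gradient f x, v⟫ t := by
    have hline : HasDerivAt (fun s : ℝ => x + s • v) v t := by
      simpa using ((hasDerivAt_id t).smul_const v).const_add x
    have hcomp : HasDerivAt (fun s : ℝ => f (x + s • v)) ⟪gradient f (x + t • v), v⟫ t := by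
      rw [inner_gradient_left]
      exact (hf _).hasFDerivAt.comp_hasDerivAt t hline
    have := (hcomp.sub_const (f x)).sub ((hasDerivAt_id t).mul_const ⟪gradient f x, v⟫)
    exact this.congr_deriv (by rw [one_mul, inner_sub_left])
  have hbound : ∀ t ∈ Set.Ico (0 : ℝ) 1,
      ‖⟪gradient f (x + t • v) - gradient f x, v⟫‖ ≤ K * t * ‖v‖ ^ 2 := by
    rintro t ⟨ht, -⟩
    calc ‖⟪gradient f (x + t • v) - gradient f x, v⟫‖
        ≤ ‖gradient f (x + t • v) - gradient f x‖ * ‖v‖ := norm_inner_le_norm _ _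
      _ ≤ K * ‖(x + t • v) - x‖ * ‖v‖ := by gcongr; exact hK.norm_sub_le _ _
      _ = K * t * ‖v‖ ^ 2 := by
        rw [add_sub_cancel_left, norm_smul, Real.norm_of_nonneg ht]
        ring
  have hB (t : ℝ) : HasDerivAt (fun s : ℝ => K / 2 * s ^ 2 * ‖v‖ ^ 2) (K * t * ‖v‖ ^ 2) t :=
    (((hasDerivAt_pow 2 t).const_mul (K / 2 : ℝ)).mul_const (‖v‖ ^ 2)).congr_deriv (by ring)
  have := image_norm_le_of_norm_deriv_right_le_deriv_boundary
    (fun t _ => (hderiv t).continuousAt.continuousWithinAt)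
    (fun t _ => (hderiv t).hasDerivWithinAt) (by simp) hB hbound (Set.right_mem_Icc.2 zero_le_one)
  simpa using this

end Smooth

section Integrability

variable {Ω : Type*} {mΩ : MeasurableSpace Ω} {P : Measure Ω}
  {F : Type*} [NormedAddCommGroup F]

theorem LipschitzWith.memLp_comp [IsFiniteMeasure P] {E : Type*} [NormedAddCommGroup E]
    {g : F → E} {K : NNReal} (hg : LipschitzWith K g) {X : Ω → F} {p : ENNReal}
    (hX : MemLp X p P) : MemLp (fun ω => g (X ω)) p P := by
  refine ((memLp_const ‖g 0‖).add (hX.norm.const_mul K)).of_le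
    (hg.continuous.comp_aestronglyMeasurable hX.1) (ae_of_all _ fun ω => ?_)
  calc ‖g (X ω)‖ ≤ ‖g 0‖ + ‖g (X ω) - g 0‖ := norm_le_norm_add_norm_sub' _ _
    _ ≤ ‖g 0‖ + K * ‖X ω‖ := by simpa using hg.norm_sub_le (X ω) 0
    _ ≤ ‖‖g 0‖ + K * ‖X ω‖‖ := Real.le_norm_self _

variable [InnerProductSpace ℝ F]

theorem MeasureTheory.MemLp.integrable_inner {X Y : Ω → F} (hX : MemLp X 2 P) (hY : MemLp Y 2 P) :
    Integrable (fun ω => ⟪X ω, Y ω⟫) P := by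
  refine (L2.integrable_inner (𝕜 := ℝ) (hX.toLp X) (hY.toLp Y)).congr ?_
  filter_upwards [hX.coeFn_toLp, hY.coeFn_toLp] with ω hXω hYω
  rw [hXω, hYω]

theorem LipschitzWith.integrable_comp_of_gradient [IsFiniteMeasure P] [CompleteSpace F]
    {f : F → ℝ} {K : NNReal} (hK : LipschitzWith K (gradient f)) (hf : Differentiable ℝ f)
    {X : Ω → F} (hX : MemLp X 2 P) : Integrable (fun ω => f (X ω)) P := by
  have hbound (y : F) : |f y| ≤ |f 0| + ‖gradient f 0‖ * ‖y‖ + K / 2 * ‖y‖ ^ 2 := by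
    have hquad := hK.abs_sub_sub_inner_gradient_le hf 0 y
    rw [sub_zero] at hquad
    have hlin := abs_real_inner_le_norm (gradient f 0) y
    calc |f y| ≤ |f 0| + |⟪gradient f 0, y⟫| + |f y - f 0 - ⟪gradient f 0, y⟫| := by
          have := abs_add_three (f 0) ⟪gradient f 0, y⟫ (f y - f 0 - ⟪gradient f 0, y⟫)
          rwa [add_add_sub_cancel, add_sub_cancel] at this
      _ ≤ _ := by gcongr
  refine Integrable.mono' (((integrable_const _).add
    ((hX.integrable one_le_two).norm.const_mul _)).add
    ((hX.integrable_norm_pow two_ne_zero).const_mul _))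
    (hf.continuous.comp_aestronglyMeasurable hX.1) (ae_of_all _ fun ω => hbound (X ω))

end Integrability

section ConditionalExpectation

variable {Ω : Type*} {m mΩ : MeasurableSpace Ω} {P : Measure Ω}
  {F : Type*} [NormedAddCommGroup F] [InnerProductSpace ℝ F] [CompleteSpace F]

theorem integral_inner_condExp [IsFiniteMeasure P] (hm : m ≤ mΩ) {X G : Ω → F}
    (hX : StronglyMeasurable[m] X)
    (hXG : Integrable (fun ω => ⟪X ω, G ω⟫) P) (hG : Integrable G P) :
    ∫ ω, ⟪X ω, P[G|m] ω⟫ ∂P = ∫ ω, ⟪X ω, G ω⟫ ∂P := calc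
  _ = ∫ ω, P[fun ω => ⟪X ω, G ω⟫|m] ω ∂P :=
    integral_congr_ae (condExp_bilin_of_stronglyMeasurable_left (innerSL ℝ) hX hXG hG).symm
  _ = _ := integral_condExp hm

variable {X G : Ω → F}

theorem integral_inner_eq_integral_norm_sq_of_condExp_eq [IsFiniteMeasure P] (hm : m ≤ mΩ)
    (hX : StronglyMeasurable[m] X) (hX2 : MemLp X 2 P) (hG2 : MemLp G 2 P)
    (hmean : P[G|m] =ᵐ[P] X) :
    ∫ ω, ⟪X ω, G ω⟫ ∂P = ∫ ω, ‖X ω‖ ^ 2 ∂P := by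
  rw [← integral_inner_condExp hm hX (hX2.integrable_inner hG2) (hG2.integrable one_le_two)]
  refine integral_congr_ae ?_
  filter_upwards [hmean] with ω hω
  rw [hω, real_inner_self_eq_norm_sq]

theorem integral_norm_sq_le_of_condExp_eq [IsProbabilityMeasure P] (hm : m ≤ mΩ)
    (hX : StronglyMeasurable[m] X) (hX2 : MemLp X 2 P) (hG2 : MemLp G 2 P)
    (hmean : P[G|m] =ᵐ[P] X) {c : ℝ} (hvar : ∀ᵐ ω ∂P, P[fun ω => ‖G ω - X ω‖ ^ 2|m] ω ≤ c) :
    ∫ ω, ‖G ω‖ ^ 2 ∂P ≤ ∫ ω, ‖X ω‖ ^ 2 ∂P + c := by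
  have hnoise : ∫ ω, ‖G ω - X ω‖ ^ 2 ∂P ≤ c := calc
    _ = ∫ ω, P[fun ω => ‖G ω - X ω‖ ^ 2|m] ω ∂P := (integral_condExp hm).symm
    _ ≤ ∫ _, c ∂P := integral_mono_ae integrable_condExp (integrable_const c) hvar
    _ = c := by simp
  have hXsq := hX2.integrable_norm_pow two_ne_zero
  have hXG := hX2.integrable_inner hG2
  have hGXsq : Integrable (fun ω => ‖G ω - X ω‖ ^ 2) P :=
    (hG2.sub hX2).integrable_norm_pow two_ne_zero
  have hsplit : (fun ω => ‖G ω‖ ^ 2) =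
      fun ω => ‖G ω - X ω‖ ^ 2 + 2 * ⟪X ω, G ω⟫ - ‖X ω‖ ^ 2 := by
    ext ω
    rw [norm_sub_sq_real, real_inner_comm]
    ring
  have hsum : Integrable (fun ω => ‖G ω - X ω‖ ^ 2 + 2 * ⟪X ω, G ω⟫) P :=
    hGXsq.add (hXG.const_mul 2)
  rw [hsplit, integral_sub hsum hXsq, integral_add hGXsq (hXG.const_mul 2), integral_const_mul,
    integral_inner_eq_integral_norm_sq_of_condExp_eq hm hX hX2 hG2 hmean]
  linarith

end ConditionalExpectation

section StochasticGradientStep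

variable {Ω : Type*} {m mΩ : MeasurableSpace Ω} {P : Measure Ω} [IsProbabilityMeasure P]
  {F : Type*} [NormedAddCommGroup F] [InnerProductSpace ℝ F] [CompleteSpace F]
  {f : F → ℝ} {K : NNReal} {W G : Ω → F} {c : ℝ}

theorem integral_comp_sub_smul_le (hK : LipschitzWith K (gradient f)) (hf : Differentiable ℝ f)
    (hm : m ≤ mΩ) (hW : StronglyMeasurable[m] W) (hW2 : MemLp W 2 P) (hG2 : MemLp G 2 P)
    (hmean : P[G|m] =ᵐ[P] fun ω => gradient f (W ω))
    (hvar : ∀ᵐ ω ∂P, P[fun ω => ‖G ω - gradient f (W ω)‖ ^ 2|m] ω ≤ c) (η : ℝ) :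
    ∫ ω, f (W ω - η • G ω) ∂P ≤ ∫ ω, f (W ω) ∂P - η * ∫ ω, ‖gradient f (W ω)‖ ^ 2 ∂P
      + K * η ^ 2 / 2 * (∫ ω, ‖gradient f (W ω)‖ ^ 2 ∂P + c) := by
  have hX : StronglyMeasurable[m] fun ω => gradient f (W ω) :=
    hK.continuous.comp_stronglyMeasurable hW
  have hX2 : MemLp (fun ω => gradient f (W ω)) 2 P := hK.memLp_comp hW2
  have hpointwise (ω : Ω) : f (W ω - η • G ω) ≤
      f (W ω) - η * ⟪gradient f (W ω), G ω⟫ + K * η ^ 2 / 2 * ‖G ω‖ ^ 2 := by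
    have h := (abs_le.1 (hK.abs_sub_sub_inner_gradient_le hf (W ω) (W ω - η • G ω))).2
    rw [sub_sub_cancel_left, inner_neg_right, inner_smul_right, norm_neg, norm_smul,
      mul_pow, Real.norm_eq_abs, sq_abs] at h
    linarith
  have hfW := hK.integrable_comp_of_gradient hf hW2
  have hXG := (hX2.integrable_inner hG2).const_mul η
  have hGsq := (hG2.integrable_norm_pow two_ne_zero).const_mul (K * η ^ 2 / 2)
  have hlinear : Integrable (fun ω => f (W ω) - η * ⟪gradient f (W ω), G ω⟫) P := hfW.sub hXG
  calc ∫ ω, f (W ω - η • G ω) ∂P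
      ≤ ∫ ω, f (W ω) - η * ⟪gradient f (W ω), G ω⟫ + K * η ^ 2 / 2 * ‖G ω‖ ^ 2 ∂P :=
        integral_mono (hK.integrable_comp_of_gradient hf (hW2.sub (hG2.const_smul η)))
          (hlinear.add hGsq) hpointwise
    _ = ∫ ω, f (W ω) ∂P - η * ∫ ω, ⟪gradient f (W ω), G ω⟫ ∂P
          + K * η ^ 2 / 2 * ∫ ω, ‖G ω‖ ^ 2 ∂P := by
        rw [integral_add hlinear hGsq, integral_sub hfW hXG, integral_const_mul,
          integral_const_mul]
    _ ≤ _ := by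
        rw [integral_inner_eq_integral_norm_sq_of_condExp_eq hm hX hX2 hG2 hmean]
        gcongr
        exact integral_norm_sq_le_of_condExp_eq hm hX hX2 hG2 hmean hvar

theorem integral_comp_sub_smul_sub_le_of_pl (hK : LipschitzWith K (gradient f))
    (hf : Differentiable ℝ f) {μ fstar : ℝ} (hPL : ∀ v, 2 * μ * (f v - fstar) ≤ ‖gradient f v‖ ^ 2)
    (hm : m ≤ mΩ) (hW : StronglyMeasurable[m] W) (hW2 : MemLp W 2 P) (hG2 : MemLp G 2 P)
    (hmean : P[G|m] =ᵐ[P] fun ω => gradient f (W ω))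
    (hvar : ∀ᵐ ω ∂P, P[fun ω => ‖G ω - gradient f (W ω)‖ ^ 2|m] ω ≤ c)
    {η : ℝ} (hη : 0 ≤ η) (hηK : η * K ≤ 1) {W' : Ω → F} (hW' : W' =ᵐ[P] fun ω => W ω - η • G ω) :
    ∫ ω, f (W' ω) ∂P - fstar ≤
      (1 - η * μ) * (∫ ω, f (W ω) ∂P - fstar) + K * η ^ 2 * c / 2 := by
  have hstep := integral_comp_sub_smul_le hK hf hm hW hW2 hG2 hmean hvar η
  have hnext : ∫ ω, f (W' ω) ∂P = ∫ ω, f (W ω - η • G ω) ∂P := integral_congr_ae (hW'.fun_comp f)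
  rw [← hnext] at hstep
  have hfW := hK.integrable_comp_of_gradient hf hW2
  have hPLint : 2 * μ * (∫ ω, f (W ω) ∂P - fstar) ≤ ∫ ω, ‖gradient f (W ω)‖ ^ 2 ∂P := calc
    _ = ∫ ω, 2 * μ * (f (W ω) - fstar) ∂P := by
      rw [integral_const_mul, integral_sub hfW (integrable_const _), integral_const]
      simp
    _ ≤ _ := integral_mono ((hfW.sub (integrable_const _)).const_mul _)
      ((hK.memLp_comp hW2).integrable_norm_pow two_ne_zero) fun ω => hPL (W ω)
  have hnonneg : 0 ≤ ∫ ω, ‖gradient f (W ω)‖ ^ 2 ∂P := integral_nonneg fun ω => by positivity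
  nlinarith [mul_nonneg hη hnonneg, mul_nonneg (mul_nonneg hη hnonneg) (sub_nonneg.2 hηK),
    mul_le_mul_of_nonneg_left hPLint hη]

end StochasticGradientStep

theorem le_pow_mul_add_of_forall_succ_le {e : ℕ → ℝ} {q b : ℝ} (hq : q ≤ 1) (hb : 0 ≤ b)
    (h : ∀ t, e (t + 1) ≤ (1 - q) * e t + q * b) (n : ℕ) : e n ≤ (1 - q) ^ n * e 0 + b := by
  induction n with
  | zero => simpa using hb
  | succ n ih => calc
      e (n + 1) ≤ (1 - q) * e n + q * b := h n
      _ ≤ (1 - q) * ((1 - q) ^ n * e 0 + b) + q * b := by gcongr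
      _ = (1 - q) ^ (n + 1) * e 0 + b := by ring

theorem one_sub_log_div_pow_le_inv {C : ℝ} (hC : 0 < C) {n : ℕ} (hn : Real.log C ≤ n) :
    (1 - Real.log C / n) ^ n ≤ C⁻¹ := calc
  _ ≤ Real.exp (-Real.log C) := Real.one_sub_div_pow_le_exp_neg hn
  _ = C⁻¹ := by rw [Real.exp_neg, Real.exp_log hC]

theorem memLp_of_forall_ae_eq_sub_smul {Ω E : Type*} {mΩ : MeasurableSpace Ω} {P : Measure Ω}
    [NormedAddCommGroup E] [NormedSpace ℝ E] {W G : ℕ → Ω → E} {p : ENNReal} {η : ℝ}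
    (hW0 : MemLp (W 0) p P) (hG : ∀ t, MemLp (G t) p P)
    (hupdate : ∀ t, ∀ᵐ ω ∂P, W (t + 1) ω = W t ω - η • G t ω) (t : ℕ) : MemLp (W t) p P := by
  induction t with
  | zero => exact hW0
  | succ t ih => exact (ih.sub ((hG t).const_smul η)).ae_eq (Filter.EventuallyEq.symm (hupdate t))

theorem le_mul_one_add_log_of_forall_succ_le {L μ σ D₀ η : ℝ} {n : ℕ} (hL : 0 < L) (hμ : 0 < μ)
    (hσ : 0 < σ) (hD₀ : 0 < D₀) (hn : 1 ≤ n) (hnlarge : σ ^ 2 * L ≤ 2 * μ ^ 2 * n * D₀)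
    (hη : η = 1 / (μ * n) * Real.log (2 * μ ^ 2 * n * D₀ / (σ ^ 2 * L))) (hημ : η * μ ≤ 1)
    {e : ℕ → ℝ} (he0 : e 0 = D₀) (h : ∀ t, e (t + 1) ≤ (1 - η * μ) * e t + L * η ^ 2 * σ ^ 2 / 2) :
    e n ≤ σ ^ 2 * L / (2 * μ ^ 2 * n) * (1 + Real.log (2 * μ ^ 2 * n * D₀ / (σ ^ 2 * L))) := by
  set C := 2 * μ ^ 2 * n * D₀ / (σ ^ 2 * L)
  have hC : 1 ≤ C := (one_le_div (by positivity)).2 hnlarge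
  have hnpos : (0 : ℝ) < n := Nat.cast_pos.2 hn
  have hημ_log : η * μ = Real.log C / n := by rw [hη]; field_simp
  have hη0 : 0 ≤ η := hη ▸ mul_nonneg (by positivity) (Real.log_nonneg hC)
  -- `b` is the noise floor: the fixed point of `x ↦ (1 - η μ) x + L η² σ² / 2`
  set b := L * η * σ ^ 2 / (2 * μ)
  have hb : η * μ * b = L * η ^ 2 * σ ^ 2 / 2 := by simp only [b]; field_simp
  have hpow : (1 - η * μ) ^ n ≤ C⁻¹ := by
    rw [hημ_log]
    exact one_sub_log_div_pow_le_inv (by positivity) ((div_le_one hnpos).1 (hημ_log ▸ hημ))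
  calc e n ≤ (1 - η * μ) ^ n * e 0 + b :=
        le_pow_mul_add_of_forall_succ_le hημ (by positivity) (fun t => hb ▸ h t) n
    _ ≤ C⁻¹ * D₀ + b := by rw [he0]; gcongr
    _ = _ := by
        simp only [b, C, hη]
        field_simp

theorem gradual_sampling_zero_bias_rate_general
    {d : ℕ} (Fs Fl : EuclideanSpace ℝ (Fin d) → ℝ) (p : ℝ)
    (hFs : Differentiable ℝ Fs) (hFl : Differentiable ℝ Fl)
    (𝓛 : EuclideanSpace ℝ (Fin d) → ℝ)
    (h𝓛 : 𝓛 = fun v => (1 - p) * Fs v + p * Fl v)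
    (L μPL Lstar σ : ℝ) (hL : 0 < L)
    (hsmooth : LipschitzWith (Real.toNNReal L) (gradient 𝓛))
    (hμ : 0 < μPL)
    (hPL : ∀ v, 2 * μPL * (𝓛 v - Lstar) ≤ ‖gradient 𝓛 v‖ ^ 2)
    (hgradeq : ∀ v, gradient Fs v = gradient Fl v)
    (w0 : EuclideanSpace ℝ (Fin d)) (D₀ : ℝ) (hD₀ : D₀ = 𝓛 w0 - Lstar)
    (hD₀pos : 0 < D₀) (hσ : 0 < σ)
    (n : ℕ) (hn : 1 ≤ n) (hnlarge : σ ^ 2 * L ≤ 2 * μPL ^ 2 * n * D₀)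
    (η₁ : ℝ) (hη₁def : η₁ = 1 / (μPL * n) * Real.log (2 * μPL ^ 2 * n * D₀ / (σ ^ 2 * L)))
    (hη₁ : η₁ ≤ 1 / L) (hη₁μ : η₁ * μPL ≤ 1)
    {Ω : Type*} {mΩ : MeasurableSpace Ω} (P : Measure Ω) [IsProbabilityMeasure P]
    (ℱ : Filtration ℕ mΩ)
    (W G : ℕ → Ω → EuclideanSpace ℝ (Fin d))
    (hadapted : Adapted ℱ W)
    (hG2 : ∀ t, MemLp (G t) 2 P)
    (hW0 : ∀ ω, W 0 ω = w0)
    (hupdate : ∀ t, ∀ᵐ ω ∂P, W (t + 1) ω = W t ω - η₁ • G t ω)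
    (hmean : ∀ t, P[G t | ℱ t] =ᵐ[P] fun ω => gradient Fs (W t ω))
    (hvar : ∀ t, ∀ᵐ ω ∂P,
      (P[(fun ω' => ‖G t ω' - gradient Fs (W t ω')‖ ^ 2) | ℱ t]) ω ≤ σ ^ 2) :
    (∫ ω, 𝓛 (W n ω) ∂P) - Lstar ≤
      σ ^ 2 * L / (2 * μPL ^ 2 * n) *
        (1 + Real.log (2 * μPL ^ 2 * n * D₀ / (σ ^ 2 * L))) := by
  have hgrad : gradient 𝓛 = gradient Fs := funext fun v => by
    rw [h𝓛]; exact gradient_affine_combination_of_gradient_eq (hFs v) (hFl v) (hgradeq v) p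
  have h𝓛diff : Differentiable ℝ 𝓛 := h𝓛 ▸ (hFs.const_mul _).add (hFl.const_mul _)
  have hW2 := memLp_of_forall_ae_eq_sub_smul
    ((memLp_const w0).ae_eq (ae_of_all _ fun ω => (hW0 ω).symm)) hG2 hupdate
  have hLK : (Real.toNNReal L : ℝ) = L := Real.coe_toNNReal _ hL.le
  have hη₁0 : 0 ≤ η₁ := hη₁def ▸ mul_nonneg (by positivity)
    (Real.log_nonneg ((one_le_div (by positivity)).2 hnlarge))
  have hη₁L : η₁ * Real.toNNReal L ≤ 1 := by rwa [hLK, ← le_div_iff₀ hL]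
  refine le_mul_one_add_log_of_forall_succ_le hL hμ hσ hD₀pos hn hnlarge hη₁def hη₁μ
    (e := fun t => ∫ ω, 𝓛 (W t ω) ∂P - Lstar) (by simp [hW0, hD₀]) fun t => ?_
  have h := integral_comp_sub_smul_sub_le_of_pl hsmooth h𝓛diff hPL (ℱ.le t)
    (hadapted t).stronglyMeasurable (hW2 t) (hG2 t) (hgrad ▸ hmean t) (hgrad ▸ hvar t) hη₁0 hη₁L
    (hupdate t)
  rwa [hLK] at h

/-- Gradual sampling with `Δ̂ = 0` (the gradients of the easy and difficult
components agree): with the step size `η₁ = log(2 μ² n D₀ / (σ² L)) / (μ n)`,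
after `n` steps the expected excess risk is `O(σ² L log n / (μ² n))`. -/
theorem gradual_sampling_zero_bias_rate
    {d : ℕ} (Fs Fl : EuclideanSpace ℝ (Fin d) → ℝ) (p : ℝ)
    (hp0 : 0 ≤ p) (hp1 : p ≤ 1)
    (hFs : Differentiable ℝ Fs) (hFl : Differentiable ℝ Fl)
    (𝓛 : EuclideanSpace ℝ (Fin d) → ℝ)
    (h𝓛 : 𝓛 = fun v => (1 - p) * Fs v + p * Fl v)
    (L μPL Lstar σ : ℝ) (hL : 0 < L)
    (hsmooth : LipschitzWith (Real.toNNReal L) (gradient 𝓛))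
    (hμ : 0 < μPL)
    (hattained : ∃ wstar, 𝓛 wstar = Lstar ∧ ∀ v, Lstar ≤ 𝓛 v)
    (hPL : ∀ v, 2 * μPL * (𝓛 v - Lstar) ≤ ‖gradient 𝓛 v‖ ^ 2)
    (hgradeq : ∀ v, gradient Fs v = gradient Fl v)
    (w0 : EuclideanSpace ℝ (Fin d)) (D₀ : ℝ) (hD₀ : D₀ = 𝓛 w0 - Lstar)
    (hD₀pos : 0 < D₀) (hσ : 0 < σ)
    (n : ℕ) (hn : 1 ≤ n) (hnlarge : σ ^ 2 * L ≤ 2 * μPL ^ 2 * n * D₀)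
    (η₁ : ℝ) (hη₁def : η₁ = 1 / (μPL * n) * Real.log (2 * μPL ^ 2 * n * D₀ / (σ ^ 2 * L)))
    (hη₁ : η₁ ≤ 1 / L) (hη₁μ : η₁ * μPL ≤ 1)
    {Ω : Type*} {mΩ : MeasurableSpace Ω} (P : Measure Ω) [IsProbabilityMeasure P]
    (ℱ : Filtration ℕ mΩ)
    (W G : ℕ → Ω → EuclideanSpace ℝ (Fin d))
    (hadapted : Adapted ℱ W)
    (hGmeas : ∀ t, StronglyMeasurable[ℱ (t + 1)] (G t))
    (hG2 : ∀ t, MemLp (G t) 2 P)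
    (hW0 : ∀ ω, W 0 ω = w0)
    (hupdate : ∀ t, ∀ᵐ ω ∂P, W (t + 1) ω = W t ω - η₁ • G t ω)
    (hmean : ∀ t, P[G t | ℱ t] =ᵐ[P] fun ω => gradient Fs (W t ω))
    (hvar : ∀ t, ∀ᵐ ω ∂P,
      (P[(fun ω' => ‖G t ω' - gradient Fs (W t ω')‖ ^ 2) | ℱ t]) ω ≤ σ ^ 2) :
    (∫ ω, 𝓛 (W n ω) ∂P) - Lstar ≤
      σ ^ 2 * L / (2 * μPL ^ 2 * n) *
        (1 + Real.log (2 * μPL ^ 2 * n * D₀ / (σ ^ 2 * L))) :=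
  gradual_sampling_zero_bias_rate_general Fs Fl p hFs hFl 𝓛 h𝓛 L μPL Lstar σ hL hsmooth hμ hPL
    hgradeq w0 D₀ hD₀ hD₀pos hσ n hn hnlarge η₁ hη₁def hη₁ hη₁μ P ℱ W G hadapted hG2 hW0 hupdate
    hmean hvar
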